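/- There exists a binary phylogenetic network N over a 3-element leaf set X such that N is based on every one of the three rooted binary phylogenetic X-trees. -/

import Mathlib

/-! Directed multigraphs, walks, and binary phylogenetic networks
(following Francis & Steel, "Which phylogenetic networks are merely
trees with additional arcs?"). -/

universe u1 u2 u3 u4 u5 u6 u7

/-- In-degree of `v`: the number of arcs with target `v`. -/
noncomputable def InDeg {V : Type u2} {A : Type u3} (t : A → V) (v : V) : ℕ := {a : A | t a = v}.ncard

/-- Out-degree of `v`: the number of arcs with source `v`. -/
noncomputable def OutDeg {V : Type u2} {A : Type u3} (s : A → V) (v : V) : ℕ := {a : A | s a = v}.ncard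

/-- In-degree of `v` in the sub-digraph with arc set `A₀`. -/
noncomputable def InDegIn {V : Type u2} {A : Type u3} (t : A → V) (A₀ : Set A) (v : V) : ℕ :=
  {a : A | a ∈ A₀ ∧ t a = v}.ncard

/-- Out-degree of `v` in the sub-digraph with arc set `A₀`. -/
noncomputable def OutDegIn {V : Type u2} {A : Type u3} (s : A → V) (A₀ : Set A) (v : V) : ℕ :=
  {a : A | a ∈ A₀ ∧ s a = v}.ncard

/-- `ArcWalk s t u p v` : the list of arcs `p` is a directed walk from `u` to `v`
(consecutive arcs are compatible). -/
inductive ArcWalk {V : Type u2} {A : Type u3} (s t : A → V) : V → List A → V → Prop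
  | nil (v : V) : ArcWalk s t v [] v
  | cons {u w : V} {a : A} {p : List A} :
      s a = u → ArcWalk s t (t a) p w → ArcWalk s t u (a :: p) w

/-- The digraph `(V, S)` is a rooted directed tree with root `r`: every vertex of `V`
is reachable from `r` by a unique directed path using only arcs in `S`. -/
def IsRootedTree {V : Type u2} {A : Type u3} (s t : A → V) (S : Set A) (r : V) : Prop :=
  ∀ v : V, ∃! p : List A, (∀ a ∈ p, a ∈ S) ∧ ArcWalk s t r p v

/-- `(V₀, A₀)` is a rooted directed tree with root `r` (as a sub-digraph of the
ambient digraph given by `s`, `t`). -/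
def IsRootedTreeOn {V : Type u2} {A : Type u3} (s t : A → V) (V₀ : Set V) (A₀ : Set A)
    (r : V) : Prop :=
  r ∈ V₀ ∧ (∀ a ∈ A₀, s a ∈ V₀ ∧ t a ∈ V₀) ∧
    ∀ v ∈ V₀, ∃! p : List A, (∀ a ∈ p, a ∈ A₀) ∧ ArcWalk s t r p v

/-- A set of arcs is independent if no two distinct arcs of it share a vertex
(the vertices of an arc `a` being `s a` and `t a`). -/
def IndepArcs {V : Type u2} {A : Type u3} (s t : A → V) (I : Set A) : Prop :=
  ∀ a ∈ I, ∀ b ∈ I, a ≠ b → s a ≠ s b ∧ s a ≠ t b ∧ t a ≠ s b ∧ t a ≠ t b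

/-- A binary phylogenetic network over the (finite) leaf set `X`: a finite acyclic
directed multigraph whose out-degree-0 vertices are exactly the (images of the)
elements of `X`, each leaf has in-degree 1, there is a unique in-degree-0 vertex
(the root) of out-degree 1 or 2, and every other vertex has in-degree 2 and
out-degree 1, or in-degree 1 and out-degree 2. -/
structure PhyloNetwork (X : Type u1) (V : Type u2) (A : Type u3) where
  src : A → V
  tgt : A → V
  leafEmb : X → V
  root : V
  finV : Finite V
  finA : Finite A
  leafEmb_inj : Function.Injective leafEmb
  acyclic : ∀ (v : V) (p : List A), p ≠ [] → ¬ ArcWalk src tgt v p v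
  leaf_iff : ∀ v : V, (∃ x : X, leafEmb x = v) ↔ OutDeg src v = 0
  leaf_indeg : ∀ x : X, InDeg tgt (leafEmb x) = 1
  root_indeg : InDeg tgt root = 0
  root_unique : ∀ v : V, InDeg tgt v = 0 → v = root
  root_outdeg : OutDeg src root = 1 ∨ OutDeg src root = 2
  deg_other : ∀ v : V, v ≠ root → (¬ ∃ x : X, leafEmb x = v) →
    (InDeg tgt v = 2 ∧ OutDeg src v = 1) ∨ (InDeg tgt v = 1 ∧ OutDeg src v = 2)

namespace PhyloNetwork

variable {X : Type u1} {V : Type u2} {A : Type u3}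

/-- The set of leaves of the network (the copy of `X` inside `V`). -/
def leaves (N : PhyloNetwork X V A) : Set V := Set.range N.leafEmb

/-- `S ⊆ A` is a support tree for `N`: the digraph `(V, S)` is a rooted directed
tree with root `N.root` whose out-degree-0 vertices are exactly the leaves. -/
def IsSupportTree (N : PhyloNetwork X V A) (S : Set A) : Prop :=
  IsRootedTree N.src N.tgt S N.root ∧
    ∀ v : V, OutDegIn N.src S v = 0 ↔ v ∈ N.leaves

/-- `N` is tree-based if it has a support tree. -/
def TreeBased (N : PhyloNetwork X V A) : Prop := ∃ S : Set A, N.IsSupportTree S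

/-- `S₁`: the arcs whose source has out-degree 1 or whose target has in-degree 1. -/
def S1 (N : PhyloNetwork X V A) : Set A :=
  {a : A | OutDeg N.src (N.src a) = 1 ∨ InDeg N.tgt (N.tgt a) = 1}

/-- `S` is admissible: it contains `S₁`, every in-degree-2 vertex has exactly one
incoming arc in `S` (C₁), and every out-degree-2 vertex has at least one outgoing
arc in `S` (C₂). -/
def Admissible (N : PhyloNetwork X V A) (S : Set A) : Prop :=
  N.S1 ⊆ S ∧
    (∀ v : V, InDeg N.tgt v = 2 → ∃! a : A, a ∈ S ∧ N.tgt a = v) ∧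
    (∀ v : V, OutDeg N.src v = 2 → ∃ a ∈ S, N.src a = v)

/-- An antichain: no directed path from one element to another distinct element. -/
def IsAntichainIn (N : PhyloNetwork X V A) (𝒜 : Set V) : Prop :=
  ∀ u ∈ 𝒜, ∀ v ∈ 𝒜, u ≠ v → ∀ p : List A, ¬ ArcWalk N.src N.tgt u p v

/-- The antichain-to-leaf property: from every antichain of non-leaf vertices there
is a family of pairwise arc-disjoint directed paths to leaves. -/
def AntichainToLeaf (N : PhyloNetwork X V A) : Prop :=
  ∀ 𝒜 : Set V, (∀ v ∈ 𝒜, v ∉ N.leaves) → N.IsAntichainIn 𝒜 →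
    ∃ p : V → List A,
      (∀ v ∈ 𝒜, ∃ w ∈ N.leaves, ArcWalk N.src N.tgt v (p v) w) ∧
      (∀ u ∈ 𝒜, ∀ v ∈ 𝒜, u ≠ v → ∀ a ∈ p u, a ∉ p v)

end PhyloNetwork

/-- The sub-digraph `(V₀, A₀)` of the digraph given by `s, t` is a subdivision of the
digraph given by `s', t'`, realized by the vertex map `φV`: the vertices of the target
digraph correspond exactly to the vertices of `(V₀, A₀)` that do not have in-degree 1
and out-degree 1, and each target arc corresponds to a directed path of `(V₀, A₀)`
with all internal vertices suppressed, these paths partitioning `A₀`. Equivalently,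
the target digraph is obtained from `(V₀, A₀)` by repeatedly suppressing all vertices
of in-degree 1 and out-degree 1. -/
def SubdivOn {V : Type u2} {A : Type u3} {V' : Type u4} {A' : Type u5}
    (s t : A → V) (V₀ : Set V) (A₀ : Set A) (s' t' : A' → V') (φV : V' → V) : Prop :=
  Function.Injective φV ∧
  (∀ v' : V', φV v' ∈ V₀) ∧
  (∀ a ∈ A₀, s a ∈ V₀ ∧ t a ∈ V₀) ∧
  (∀ v ∈ V₀, v ∈ Set.range φV ↔ ¬ (InDegIn t A₀ v = 1 ∧ OutDegIn s A₀ v = 1)) ∧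
  ∃ φA : A' → List A,
    (∀ e : A', φA e ≠ [] ∧ (φA e).Nodup ∧ (∀ a ∈ φA e, a ∈ A₀) ∧
      ArcWalk s t (φV (s' e)) (φA e) (φV (t' e)) ∧
      ∀ a ∈ (φA e).dropLast, t a ∉ Set.range φV) ∧
    (∀ a ∈ A₀, ∃! e : A', a ∈ φA e)

/-- A rooted binary phylogenetic `X`-tree: a binary phylogenetic network over `X`
with no vertices of in-degree 2. -/
def IsPhyloTree {X : Type u1} {V : Type u2} {A : Type u3}
    (T : PhyloNetwork X V A) : Prop :=
  ∀ v : V, InDeg T.tgt v ≠ 2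

/-- `N` is based on the tree `T`: `N` has a support tree `S` such that `(V, S)` is a
subdivision of `T`, matching roots and leaf labels. -/
def BasedOn {X : Type u1} {V : Type u2} {A : Type u3} {V' : Type u4} {A' : Type u5}
    (N : PhyloNetwork X V A) (T : PhyloNetwork X V' A') : Prop :=
  ∃ (S : Set A) (φV : V' → V),
    N.IsSupportTree S ∧
    SubdivOn N.src N.tgt Set.univ S T.src T.tgt φV ∧
    φV T.root = N.root ∧
    ∀ x : X, φV (T.leafEmb x) = N.leafEmb x

/-- `N` displays the tree `T`: there are `V₀ ⊆ V` and `A₀ ⊆ A` forming a rooted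
directed tree whose out-degree-0 vertices are exactly the leaves of `N`, such that
`T` is obtained from `(V₀, A₀)` by repeatedly suppressing vertices of in-degree 1 and
out-degree 1 and deleting the root together with its outgoing arc so long as the root
has out-degree 1 (the deleted root chain is the path `p₀`). -/
def Displays {X : Type u1} {V : Type u2} {A : Type u3} {V' : Type u4} {A' : Type u5}
    (N : PhyloNetwork X V A) (T : PhyloNetwork X V' A') : Prop :=
  ∃ (V₀ : Set V) (A₀ : Set A) (r₀ : V) (φV : V' → V) (p₀ : List A) (φA : A' → List A),
    IsRootedTreeOn N.src N.tgt V₀ A₀ r₀ ∧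
    (∀ v ∈ V₀, OutDegIn N.src A₀ v = 0 ↔ v ∈ N.leaves) ∧
    Function.Injective φV ∧
    (∀ v' : V', φV v' ∈ V₀) ∧
    (∀ x : X, φV (T.leafEmb x) = N.leafEmb x) ∧
    p₀.Nodup ∧ (∀ a ∈ p₀, a ∈ A₀) ∧
    ArcWalk N.src N.tgt r₀ p₀ (φV T.root) ∧
    (∀ a ∈ p₀, OutDegIn N.src A₀ (N.src a) = 1 ∧ N.src a ∉ Set.range φV) ∧
    (∀ e : A', φA e ≠ [] ∧ (φA e).Nodup ∧ (∀ a ∈ φA e, a ∈ A₀) ∧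
      ArcWalk N.src N.tgt (φV (T.src e)) (φA e) (φV (T.tgt e)) ∧
      ∀ a ∈ (φA e).dropLast, N.tgt a ∉ Set.range φV) ∧
    (∀ a ∈ A₀, (a ∈ p₀ ∧ ∀ e : A', a ∉ φA e) ∨ (a ∉ p₀ ∧ ∃! e : A', a ∈ φA e))

/-- The vertices of `N` having a directed path (possibly trivial) to a vertex in `L`. -/
def KeepV {X : Type u1} {V : Type u2} {A : Type u3}
    (N : PhyloNetwork X V A) (L : Set V) : Set V :=
  {v : V | ∃ (p : List A) (w : V), w ∈ L ∧ ArcWalk N.src N.tgt v p w}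

/-- The arcs of `N` lying on a directed path ending at a vertex in `L`. -/
def KeepA {X : Type u1} {V : Type u2} {A : Type u3}
    (N : PhyloNetwork X V A) (L : Set V) : Set A :=
  {a : A | ∃ (p : List A) (w : V), w ∈ L ∧ ArcWalk N.src N.tgt (N.tgt a) p w}


/-!
Every rooted binary phylogenetic tree on the leaves `0, 1, 2` is isomorphic to one of six
explicit trees: an outgroup `i` next to the cherry `{i + 1, i + 2}`, with or without a root
edge. This comes from counting the leaves below the two children of the topmost vertex of
out-degree two: these leaf sets are disjoint (paths from the root are unique) and nonempty,
and below a vertex that is not a leaf there are at least two leaves. Being based on a tree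
is invariant under isomorphisms of the tree, so it remains to exhibit one network with a
suitable support tree for each of the six trees; these are checked by computation.
-/

section Walks

variable {V A : Type*} {s t : A → V}

theorem ArcWalk.nil_iff {u v : V} : ArcWalk s t u [] v ↔ u = v :=
  ⟨fun h => by cases h; rfl, fun h => h ▸ .nil u⟩

theorem ArcWalk.cons_iff {u v : V} {a : A} {p : List A} :
    ArcWalk s t u (a :: p) v ↔ s a = u ∧ ArcWalk s t (t a) p v :=
  ⟨fun h => by cases h with | cons ha hp => exact ⟨ha, hp⟩, fun h => .cons h.1 h.2⟩

instance ArcWalk.decidable [DecidableEq V] :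
    ∀ (u : V) (p : List A) (v : V), Decidable (ArcWalk s t u p v)
  | _, [], _ => decidable_of_iff _ ArcWalk.nil_iff.symm
  | _, a :: p, v =>
    have := ArcWalk.decidable (t a) p v
    decidable_of_iff _ ArcWalk.cons_iff.symm

theorem ArcWalk.append_iff {u w : V} {p q : List A} :
    ArcWalk s t u (p ++ q) w ↔ ∃ v, ArcWalk s t u p v ∧ ArcWalk s t v q w := by
  induction p generalizing u with
  | nil => simp [ArcWalk.nil_iff]
  | cons a p ih => simp [ArcWalk.cons_iff, ih, and_assoc]

theorem ArcWalk.singleton_iff {u v : V} {a : A} : ArcWalk s t u [a] v ↔ s a = u ∧ t a = v := by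
  simp [ArcWalk.cons_iff, ArcWalk.nil_iff]

theorem ArcWalk.append {u v w : V} {p q : List A} (hp : ArcWalk s t u p v)
    (hq : ArcWalk s t v q w) : ArcWalk s t u (p ++ q) w :=
  ArcWalk.append_iff.2 ⟨v, hp, hq⟩

theorem ArcWalk.singleton (a : A) : ArcWalk s t (s a) [a] (t a) :=
  ArcWalk.singleton_iff.2 ⟨rfl, rfl⟩

theorem ArcWalk.of_closed {P : V → Prop} (hP : ∀ a, P (s a) → P (t a)) {u v : V} {p : List A}
    (h : ArcWalk s t u p v) (hu : P u) : P v := by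
  induction h with
  | nil => exact hu
  | cons ha _ ih => exact ih (hP _ (ha ▸ hu))

theorem acyclic_of_rank (rank : V → ℕ) (hrank : ∀ a, rank (s a) < rank (t a)) (v : V)
    (p : List A) (hp : p ≠ []) : ¬ ArcWalk s t v p v := by
  obtain ⟨a, p, rfl⟩ := List.exists_cons_of_ne_nil hp
  intro h
  obtain ⟨rfl, h⟩ := ArcWalk.cons_iff.1 h
  have : rank (t a) ≤ rank (s a) := h.of_closed (P := (rank (t a) ≤ rank ·))
    (fun b hb => hb.trans (hrank b).le) le_rfl
  exact (hrank a).not_ge this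

end Walks

section Degrees

variable {V A : Type*}

theorem inDeg_eq_zero_iff [Finite A] {t : A → V} {v : V} : InDeg t v = 0 ↔ ∀ a, t a ≠ v := by
  rw [InDeg, Set.ncard_eq_zero (Set.toFinite _), Set.eq_empty_iff_forall_notMem]
  rfl

theorem outDeg_eq_zero_iff [Finite A] {s : A → V} {v : V} : OutDeg s v = 0 ↔ ∀ a, s a ≠ v :=
  inDeg_eq_zero_iff

theorem inDeg_eq_one_iff {t : A → V} {v : V} : InDeg t v = 1 ↔ ∃ a, ∀ e, t e = v ↔ e = a := by
  simp only [InDeg, Set.ncard_eq_one, Set.ext_iff, Set.mem_ofPred_eq, Set.mem_singleton_iff]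

theorem outDeg_eq_one_iff {s : A → V} {v : V} : OutDeg s v = 1 ↔ ∃ a, ∀ e, s e = v ↔ e = a :=
  inDeg_eq_one_iff

theorem outDeg_eq_two_iff {s : A → V} {v : V} :
    OutDeg s v = 2 ↔ ∃ a b, a ≠ b ∧ ∀ e, s e = v ↔ e = a ∨ e = b := by
  simp only [OutDeg, Set.ncard_eq_two, Set.ext_iff, Set.mem_ofPred_eq, Set.mem_insert_iff,
    Set.mem_singleton_iff]

theorem inDegIn_eq_zero_iff [Finite A] {t : A → V} {S : Set A} {v : V} :
    InDegIn t S v = 0 ↔ ∀ a ∈ S, t a ≠ v := by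
  rw [InDegIn, Set.ncard_eq_zero (Set.toFinite _), Set.eq_empty_iff_forall_notMem]
  simp

theorem inDegIn_eq_one_iff {t : A → V} {S : Set A} {v : V} :
    InDegIn t S v = 1 ↔ ∃! a, a ∈ S ∧ t a = v := by
  rw [InDegIn, Set.ncard_eq_one]
  simp only [Set.ext_iff, Set.mem_ofPred_eq, Set.mem_singleton_iff]
  exact ⟨fun ⟨a, ha⟩ => ⟨a, (ha a).2 rfl, fun b hb => (ha b).1 hb⟩,
    fun ⟨a, ha, hu⟩ => ⟨a, fun b => ⟨hu b, fun h => h ▸ ha⟩⟩⟩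

theorem inDeg_eq_card [Fintype A] [DecidableEq V] (t : A → V) (v : V) :
    InDeg t v = (Finset.univ.filter (t · = v)).card := by
  rw [InDeg, Set.ncard_eq_toFinset_card']
  simp

theorem outDeg_eq_card [Fintype A] [DecidableEq V] (s : A → V) (v : V) :
    OutDeg s v = (Finset.univ.filter (s · = v)).card :=
  inDeg_eq_card s v

theorem inDegIn_coe [DecidableEq V] (t : A → V) (S : Finset A) (v : V) :
    InDegIn t ↑S v = (S.filter (t · = v)).card := by
  rw [InDegIn, ← Set.ncard_coe_finset]
  congr 1
  ext a
  simp

theorem outDegIn_coe [DecidableEq V] (s : A → V) (S : Finset A) (v : V) :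
    OutDegIn s ↑S v = (S.filter (s · = v)).card :=
  inDegIn_coe s S v

end Degrees

section RootedTree

variable {V A : Type*} {s t : A → V}

theorem isRootedTree_of_inDegIn [Finite V] [Finite A] {S : Set A} {r : V}
    (hacyc : ∀ v p, p ≠ [] → ¬ ArcWalk s t v p v)
    (hr : InDegIn t S r = 0) (hv : ∀ v, v ≠ r → InDegIn t S v = 1) :
    IsRootedTree s t S r := by
  let Before : V → V → Prop := fun u v => ∃ p, p ≠ [] ∧ ArcWalk s t u p v
  have : IsTrans V Before :=
    ⟨fun _ _ _ ⟨p, hp, h⟩ ⟨q, _, h'⟩ => ⟨p ++ q, by simp [hp], h.append h'⟩⟩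
  have : Std.Irrefl Before := ⟨fun v ⟨p, hp, h⟩ => hacyc v p hp h⟩
  rw [inDegIn_eq_zero_iff] at hr
  intro v
  induction v using (Finite.wellFounded_of_trans_of_irrefl Before).induction with
  | _ v ih =>
  by_cases hvr : v = r
  · subst hvr
    refine ⟨[], ⟨by simp, .nil v⟩, fun p ⟨hpS, hp⟩ => ?_⟩
    rcases p.eq_nil_or_concat' with rfl | ⟨q, a, rfl⟩
    · rfl
    · obtain ⟨_, -, ha⟩ := ArcWalk.append_iff.1 hp
      exact absurd (ArcWalk.singleton_iff.1 ha).2 (hr a (hpS a (by simp)))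
  · obtain ⟨a, ⟨haS, hav⟩, ha⟩ := inDegIn_eq_one_iff.1 (hv v hvr)
    have hwa : ArcWalk s t (s a) [a] v := hav ▸ .singleton a
    obtain ⟨p, ⟨hpS, hp⟩, hpu⟩ := ih (s a) ⟨[a], by simp, hwa⟩
    refine ⟨p ++ [a], ⟨fun b hb => ?_, hp.append hwa⟩, fun q ⟨hqS, hq⟩ => ?_⟩
    · rcases List.mem_append.1 hb with hb | hb
      exacts [hpS b hb, List.mem_singleton.1 hb ▸ haS]
    rcases q.eq_nil_or_concat' with rfl | ⟨q, b, rfl⟩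
    · exact absurd (ArcWalk.nil_iff.1 hq).symm hvr
    · obtain ⟨w, hq, hb⟩ := ArcWalk.append_iff.1 hq
      obtain ⟨rfl, hbv⟩ := ArcWalk.singleton_iff.1 hb
      obtain rfl := ha b ⟨hqS b (by simp), hbv⟩
      rw [hpu q ⟨fun c hc => hqS c (by simp [hc]), hq⟩]

end RootedTree

namespace PhyloNetwork

variable {X V A : Type*} (T : PhyloNetwork X V A)

theorem tgt_ne_root (a : A) : T.tgt a ≠ T.root :=
  have := T.finA
  inDeg_eq_zero_iff.1 T.root_indeg a

theorem exists_tgt_eq {v : V} (hv : v ≠ T.root) : ∃ a, T.tgt a = v := by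
  have := T.finA
  by_contra! h
  exact hv (T.root_unique v (inDeg_eq_zero_iff.2 h))

theorem src_ne_leafEmb (a : A) (x : X) : T.src a ≠ T.leafEmb x :=
  have := T.finA
  outDeg_eq_zero_iff.1 ((T.leaf_iff _).1 ⟨x, rfl⟩) a

theorem src_ne_tgt (a : A) : T.src a ≠ T.tgt a := fun h =>
  T.acyclic _ [a] (List.cons_ne_nil a []) (ArcWalk.singleton_iff.2 ⟨rfl, h.symm⟩)

theorem root_ne_leafEmb (x : X) : T.root ≠ T.leafEmb x := fun h => by
  have := (T.leaf_iff _).1 ⟨x, h.symm⟩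
  rcases T.root_outdeg with h | h <;> omega

theorem eq_leafEmb_of_arcWalk {x : X} {p : List A} {v : V}
    (h : ArcWalk T.src T.tgt (T.leafEmb x) p v) : v = T.leafEmb x := by
  rcases p with _ | ⟨a, p⟩
  · exact (ArcWalk.nil_iff.1 h).symm
  · exact absurd (ArcWalk.cons_iff.1 h).1 (T.src_ne_leafEmb a x)

theorem exists_arcWalk_to_leafEmb (v : V) : ∃ p x, ArcWalk T.src T.tgt v p (T.leafEmb x) := by
  have := T.finV
  have := T.finA
  let After : V → V → Prop := fun u v => ∃ p, p ≠ [] ∧ ArcWalk T.src T.tgt v p u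
  have : IsTrans V After :=
    ⟨fun _ _ _ ⟨p, hp, h⟩ ⟨q, _, h'⟩ => ⟨q ++ p, by simp [hp], h'.append h⟩⟩
  have : Std.Irrefl After := ⟨fun v ⟨p, hp, h⟩ => T.acyclic v p hp h⟩
  induction v using (Finite.wellFounded_of_trans_of_irrefl After).induction with
  | _ v ih =>
  by_cases hv : ∃ x, T.leafEmb x = v
  · obtain ⟨x, rfl⟩ := hv
    exact ⟨[], x, .nil _⟩
  · obtain ⟨a, rfl⟩ : ∃ a, T.src a = v := by
      by_contra! h
      exact hv ((T.leaf_iff v).2 (outDeg_eq_zero_iff.2 h))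
    obtain ⟨p, x, hp⟩ := ih (T.tgt a) ⟨[a], by simp, .singleton a⟩
    exact ⟨a :: p, x, .cons rfl hp⟩

end PhyloNetwork

section Trees

variable {X V A : Type*} {T : PhyloNetwork X V A}

theorem IsPhyloTree.inDeg_eq_one (hT : IsPhyloTree T) {v : V} (hv : v ≠ T.root) :
    InDeg T.tgt v = 1 := by
  by_cases hl : ∃ x, T.leafEmb x = v
  · obtain ⟨x, rfl⟩ := hl
    exact T.leaf_indeg x
  · rcases T.deg_other v hv hl with ⟨h, -⟩ | ⟨h, -⟩
    exacts [absurd h (hT v), h]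

theorem IsPhyloTree.exists_outArcs_eq_pair (hT : IsPhyloTree T) {v : V} (hv : v ≠ T.root)
    (hl : ∀ x, T.leafEmb x ≠ v) : ∃ a b, a ≠ b ∧ ∀ e, T.src e = v ↔ e = a ∨ e = b := by
  rcases T.deg_other v hv (not_exists.2 hl) with ⟨h, -⟩ | ⟨-, h⟩
  exacts [absurd h (hT v), outDeg_eq_two_iff.1 h]

theorem IsPhyloTree.tgt_injective (hT : IsPhyloTree T) : Function.Injective T.tgt := by
  intro a b hab
  obtain ⟨e, he⟩ := inDeg_eq_one_iff.1 (hT.inDeg_eq_one (T.tgt_ne_root a))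
  exact ((he a).1 rfl).trans ((he b).1 hab.symm).symm

theorem IsPhyloTree.isRootedTree (hT : IsPhyloTree T) :
    IsRootedTree T.src T.tgt Set.univ T.root := by
  have := T.finV
  have := T.finA
  refine isRootedTree_of_inDegIn T.acyclic ?_ fun v hv => ?_
  · simpa only [InDegIn, InDeg, Set.mem_univ, true_and] using T.root_indeg
  · simpa only [InDegIn, InDeg, Set.mem_univ, true_and] using hT.inDeg_eq_one hv

theorem IsPhyloTree.exists_arcWalk_from_root (hT : IsPhyloTree T) (v : V) :
    ∃ p, ArcWalk T.src T.tgt T.root p v :=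
  let ⟨p, ⟨_, hp⟩, _⟩ := hT.isRootedTree v
  ⟨p, hp⟩

theorem IsPhyloTree.arcWalk_from_root_unique (hT : IsPhyloTree T) {v : V} {p q : List A}
    (hp : ArcWalk T.src T.tgt T.root p v) (hq : ArcWalk T.src T.tgt T.root q v) : p = q :=
  (hT.isRootedTree v).unique ⟨fun _ _ => trivial, hp⟩ ⟨fun _ _ => trivial, hq⟩

end Trees

namespace PhyloNetwork

variable {X V A : Type*} [Fintype X] (T : PhyloNetwork X V A)

open Classical in
noncomputable def leavesBelow (v : V) : Finset X :=
  Finset.univ.filter fun x => ∃ p, ArcWalk T.src T.tgt v p (T.leafEmb x)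

variable {T}

theorem mem_leavesBelow {v : V} {x : X} :
    x ∈ T.leavesBelow v ↔ ∃ p, ArcWalk T.src T.tgt v p (T.leafEmb x) := by
  simp [leavesBelow]

variable (T)

theorem leavesBelow_leafEmb (x : X) : T.leavesBelow (T.leafEmb x) = {x} := by
  ext y
  rw [mem_leavesBelow, Finset.mem_singleton]
  exact ⟨fun ⟨_, h⟩ => T.leafEmb_inj (T.eq_leafEmb_of_arcWalk h), fun h => ⟨[], h ▸ .nil _⟩⟩

theorem leavesBelow_nonempty (v : V) : (T.leavesBelow v).Nonempty :=
  let ⟨p, x, h⟩ := T.exists_arcWalk_to_leafEmb v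
  ⟨x, mem_leavesBelow.2 ⟨p, h⟩⟩

theorem mem_leavesBelow_iff_exists_arc {v : V} {x : X} (hv : v ≠ T.leafEmb x) :
    x ∈ T.leavesBelow v ↔ ∃ a, T.src a = v ∧ x ∈ T.leavesBelow (T.tgt a) := by
  simp only [mem_leavesBelow]
  constructor
  · rintro ⟨_ | ⟨a, p⟩, h⟩
    · exact absurd (ArcWalk.nil_iff.1 h) hv
    · obtain ⟨ha, h⟩ := ArcWalk.cons_iff.1 h
      exact ⟨a, ha, p, h⟩
  · rintro ⟨a, rfl, p, h⟩
    exact ⟨a :: p, .cons rfl h⟩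

theorem leavesBelow_eq_of_outArcs {v : V} {a : A} (hout : ∀ e, T.src e = v ↔ e = a) :
    T.leavesBelow v = T.leavesBelow (T.tgt a) := by
  ext x
  rw [T.mem_leavesBelow_iff_exists_arc ((hout a).2 rfl ▸ T.src_ne_leafEmb a x)]
  simp [hout]

theorem leavesBelow_eq_union_of_outArcs [DecidableEq X] {v : V} {a b : A}
    (hout : ∀ e, T.src e = v ↔ e = a ∨ e = b) :
    T.leavesBelow v = T.leavesBelow (T.tgt a) ∪ T.leavesBelow (T.tgt b) := by
  ext x
  rw [T.mem_leavesBelow_iff_exists_arc ((hout a).2 (.inl rfl) ▸ T.src_ne_leafEmb a x)]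
  simp [hout, or_and_right, exists_or]

end PhyloNetwork

section Clusters

variable {X V A : Type*} [Fintype X] {T : PhyloNetwork X V A}

theorem IsPhyloTree.leavesBelow_root (hT : IsPhyloTree T) : T.leavesBelow T.root = Finset.univ :=
  Finset.eq_univ_of_forall fun x =>
    PhyloNetwork.mem_leavesBelow.2 (hT.exists_arcWalk_from_root (T.leafEmb x))

theorem IsPhyloTree.disjoint_leavesBelow (hT : IsPhyloTree T) {a b : A} (hab : a ≠ b)
    (hsrc : T.src a = T.src b) : Disjoint (T.leavesBelow (T.tgt a)) (T.leavesBelow (T.tgt b)) := by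
  refine Finset.disjoint_left.2 fun x hxa hxb => hab ?_
  obtain ⟨p, hp⟩ := PhyloNetwork.mem_leavesBelow.1 hxa
  obtain ⟨q, hq⟩ := PhyloNetwork.mem_leavesBelow.1 hxb
  obtain ⟨r, hr⟩ := hT.exists_arcWalk_from_root (T.src a)
  have := hT.arcWalk_from_root_unique (hr.append (.cons rfl hp)) (hr.append (.cons hsrc.symm hq))
  exact (List.cons.inj (List.append_cancel_left this)).1

theorem IsPhyloTree.eq_leafEmb_of_leavesBelow_eq_singleton [DecidableEq X]
    (hT : IsPhyloTree T) {v : V} (hv : v ≠ T.root) {x : X} (h : T.leavesBelow v = {x}) :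
    v = T.leafEmb x := by
  by_cases hl : ∃ y, T.leafEmb y = v
  · obtain ⟨y, rfl⟩ := hl
    rw [T.leavesBelow_leafEmb, Finset.singleton_inj] at h
    rw [h]
  · obtain ⟨a, b, hab, hout⟩ := hT.exists_outArcs_eq_pair hv (not_exists.1 hl)
    have hcard := Finset.card_union_of_disjoint
      (hT.disjoint_leavesBelow hab (((hout a).2 (.inl rfl)).trans ((hout b).2 (.inr rfl)).symm))
    rw [← T.leavesBelow_eq_union_of_outArcs hout, h, Finset.card_singleton] at hcard
    have := (T.leavesBelow_nonempty (T.tgt a)).card_pos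
    have := (T.leavesBelow_nonempty (T.tgt b)).card_pos
    omega

end Clusters

section Cherries

theorem fin3_split_univ : ∀ s t : Finset (Fin 3), Disjoint s t → s ∪ t = Finset.univ →
    s.Nonempty → t.Nonempty →
    ∃ i, s = {i} ∧ t = {i + 1, i + 2} ∨ t = {i} ∧ s = {i + 1, i + 2} := by
  decide

theorem fin3_split_pair : ∀ (i : Fin 3) (s t : Finset (Fin 3)), Disjoint s t →
    s ∪ t = {i + 1, i + 2} → s.Nonempty → t.Nonempty →
    s = {i + 1} ∧ t = {i + 2} ∨ s = {i + 2} ∧ t = {i + 1} := by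
  decide

theorem fin3_singleton_ne_pair : ∀ x i : Fin 3, ({x} : Finset (Fin 3)) ≠ {i + 1, i + 2} := by
  decide

variable {V A : Type*} {T : PhyloNetwork (Fin 3) V A}

/-- Below `z` the tree is `(i, (i + 1, i + 2))`, the cherry hanging from `c`. -/
structure PhyloNetwork.HasCherryBelow (T : PhyloNetwork (Fin 3) V A) (z c : V) (i : Fin 3) :
    Prop where
  arc_leaf : ∃ a, T.src a = z ∧ T.tgt a = T.leafEmb i
  arc_cherry : ∃ a, T.src a = z ∧ T.tgt a = c
  cherry_arc_leaf_add_one : ∃ a, T.src a = c ∧ T.tgt a = T.leafEmb (i + 1)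
  cherry_arc_leaf_add_two : ∃ a, T.src a = c ∧ T.tgt a = T.leafEmb (i + 2)
  cherry_ne_leafEmb : ∀ x, c ≠ T.leafEmb x
  tgt_of_src : ∀ a, T.src a = z ∨ T.src a = c → T.tgt a = c ∨ ∃ x, T.tgt a = T.leafEmb x

theorem IsPhyloTree.hasCherryBelow_of_leavesBelow (hT : IsPhyloTree T) {z : V} {a₁ a₂ : A}
    {i : Fin 3} (hout : ∀ e, T.src e = z ↔ e = a₁ ∨ e = a₂)
    (h₁ : T.leavesBelow (T.tgt a₁) = {i}) (h₂ : T.leavesBelow (T.tgt a₂) = {i + 1, i + 2}) :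
    T.HasCherryBelow z (T.tgt a₂) i := by
  have hleaf (b : A) (x : Fin 3) (h : T.leavesBelow (T.tgt b) = {x}) : T.tgt b = T.leafEmb x :=
    hT.eq_leafEmb_of_leavesBelow_eq_singleton (T.tgt_ne_root b) h
  have hc (x : Fin 3) : T.leafEmb x ≠ T.tgt a₂ := fun hx => by
    rw [← hx, T.leavesBelow_leafEmb] at h₂
    exact fin3_singleton_ne_pair x i h₂
  obtain ⟨b₁, b₂, hb, hcout⟩ := hT.exists_outArcs_eq_pair (T.tgt_ne_root a₂) hc
  have hb₁ := (hcout b₁).2 (.inl rfl)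
  have hb₂ := (hcout b₂).2 (.inr rfl)
  have hsplit := T.leavesBelow_eq_union_of_outArcs hcout
  rw [h₂] at hsplit
  obtain ⟨x₁, x₂, hx₁, hx₂, hx⟩ : ∃ x₁ x₂, T.tgt b₁ = T.leafEmb x₁ ∧ T.tgt b₂ = T.leafEmb x₂ ∧
      (x₁ = i + 1 ∧ x₂ = i + 2 ∨ x₁ = i + 2 ∧ x₂ = i + 1) := by
    rcases fin3_split_pair i _ _ (hT.disjoint_leavesBelow hb (hb₁.trans hb₂.symm)) hsplit.symm
      (T.leavesBelow_nonempty _) (T.leavesBelow_nonempty _) with ⟨h₁, h₂⟩ | ⟨h₁, h₂⟩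
    exacts [⟨_, _, hleaf _ _ h₁, hleaf _ _ h₂, .inl ⟨rfl, rfl⟩⟩,
      ⟨_, _, hleaf _ _ h₁, hleaf _ _ h₂, .inr ⟨rfl, rfl⟩⟩]
  refine ⟨⟨a₁, (hout a₁).2 (.inl rfl), hleaf a₁ i h₁⟩, ⟨a₂, (hout a₂).2 (.inr rfl), rfl⟩,
    ?_, ?_, fun x h => hc x h.symm, fun a ha => ?_⟩
  · rcases hx with ⟨rfl, -⟩ | ⟨-, rfl⟩
    exacts [⟨b₁, hb₁, hx₁⟩, ⟨b₂, hb₂, hx₂⟩]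
  · rcases hx with ⟨-, rfl⟩ | ⟨rfl, -⟩
    exacts [⟨b₂, hb₂, hx₂⟩, ⟨b₁, hb₁, hx₁⟩]
  · rcases ha with ha | ha
    · rcases (hout a).1 ha with rfl | rfl
      exacts [.inr ⟨i, hleaf a i h₁⟩, .inl rfl]
    · rcases (hcout a).1 ha with rfl | rfl
      exacts [.inr ⟨x₁, hx₁⟩, .inr ⟨x₂, hx₂⟩]

theorem IsPhyloTree.exists_hasCherryBelow (hT : IsPhyloTree T) {z : V} {a₁ a₂ : A}
    (hne : a₁ ≠ a₂) (hout : ∀ e, T.src e = z ↔ e = a₁ ∨ e = a₂)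
    (hz : T.leavesBelow z = Finset.univ) : ∃ c i, T.HasCherryBelow z c i := by
  rw [T.leavesBelow_eq_union_of_outArcs hout] at hz
  have hsrc := ((hout a₁).2 (.inl rfl)).trans ((hout a₂).2 (.inr rfl)).symm
  rcases fin3_split_univ _ _ (hT.disjoint_leavesBelow hne hsrc) hz (T.leavesBelow_nonempty _)
    (T.leavesBelow_nonempty _) with ⟨i, ⟨h₁, h₂⟩ | ⟨h₂, h₁⟩⟩
  · exact ⟨_, i, hT.hasCherryBelow_of_leavesBelow hout h₁ h₂⟩
  · exact ⟨_, i, hT.hasCherryBelow_of_leavesBelow (fun e => (hout e).trans or_comm) h₂ h₁⟩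

end Cherries

structure PhyloNetwork.Iso {X V₀ A₀ V A : Type*} (T₀ : PhyloNetwork X V₀ A₀)
    (T : PhyloNetwork X V A) where
  vertexEquiv : V₀ ≃ V
  arcEquiv : A₀ ≃ A
  src_arcEquiv : ∀ e, T.src (arcEquiv e) = vertexEquiv (T₀.src e)
  tgt_arcEquiv : ∀ e, T.tgt (arcEquiv e) = vertexEquiv (T₀.tgt e)
  vertexEquiv_root : vertexEquiv T₀.root = T.root
  vertexEquiv_leafEmb : ∀ x, vertexEquiv (T₀.leafEmb x) = T.leafEmb x

section Iso

variable {X V₀ A₀ V A V' A' : Type*}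

theorem BasedOn.of_iso {N : PhyloNetwork X V A} {T₀ : PhyloNetwork X V₀ A₀}
    {T : PhyloNetwork X V' A'} (h : BasedOn N T₀) (e : T₀.Iso T) : BasedOn N T := by
  obtain ⟨S, φV, hS, ⟨hinj, -, hS_arcs, hrange, φA, hpath, hpart⟩, hroot, hleaf⟩ := h
  have hsrc (a : A') : e.vertexEquiv.symm (T.src a) = T₀.src (e.arcEquiv.symm a) := by
    rw [Equiv.symm_apply_eq, ← e.src_arcEquiv, Equiv.apply_symm_apply]
  have htgt (a : A') : e.vertexEquiv.symm (T.tgt a) = T₀.tgt (e.arcEquiv.symm a) := by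
    rw [Equiv.symm_apply_eq, ← e.tgt_arcEquiv, Equiv.apply_symm_apply]
  refine ⟨S, φV ∘ e.vertexEquiv.symm, hS, ⟨hinj.comp e.vertexEquiv.symm.injective,
    fun _ => trivial, hS_arcs, ?_, φA ∘ e.arcEquiv.symm, fun a => ?_, fun a ha => ?_⟩, ?_, ?_⟩
  · rwa [EquivLike.range_comp]
  · simpa only [Function.comp_apply, hsrc, htgt, EquivLike.range_comp] using
      hpath (e.arcEquiv.symm a)
  · exact e.arcEquiv.existsUnique_congr_left.1 (hpart a ha)
  · simp only [Function.comp_apply, ← e.vertexEquiv_root, Equiv.symm_apply_apply, hroot]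
  · simp only [Function.comp_apply, ← e.vertexEquiv_leafEmb, Equiv.symm_apply_apply, hleaf,
      implies_true]

theorem PhyloNetwork.nonempty_iso_of_bijective {T₀ : PhyloNetwork X V₀ A₀}
    {T : PhyloNetwork X V A} (h₀ : Function.Injective T₀.tgt) (h : Function.Injective T.tgt)
    (f : V₀ → V) (hf : f.Bijective) (hroot : f T₀.root = T.root)
    (hleaf : ∀ x, f (T₀.leafEmb x) = T.leafEmb x)
    (harc : ∀ e, ∃ a, T.src a = f (T₀.src e) ∧ T.tgt a = f (T₀.tgt e)) :
    Nonempty (T₀.Iso T) := by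
  choose g hg_src hg_tgt using harc
  have hg : g.Bijective := by
    refine ⟨fun e e' he => h₀ (hf.1 ?_), fun a => ?_⟩
    · rw [← hg_tgt, ← hg_tgt, he]
    obtain ⟨w, hw⟩ := hf.2 (T.tgt a)
    have hw₀ : w ≠ T₀.root := by
      rintro rfl
      exact T.tgt_ne_root a (hw.symm.trans hroot)
    obtain ⟨e, rfl⟩ := T₀.exists_tgt_eq hw₀
    exact ⟨e, h (by rw [hg_tgt, hw])⟩
  exact ⟨⟨.ofBijective f hf, .ofBijective g hg, hg_src, hg_tgt, hroot, hleaf⟩⟩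

end Iso

section CherryTrees

def cherryTree (i : Fin 3) : PhyloNetwork (Fin 3) (Fin 2 ⊕ Fin 3) (Fin 4) where
  src := ![.inl 0, .inl 0, .inl 1, .inl 1]
  tgt := ![.inr i, .inl 1, .inr (i + 1), .inr (i + 2)]
  leafEmb := .inr
  root := .inl 0
  finV := inferInstance
  finA := inferInstance
  leafEmb_inj := Sum.inr_injective
  acyclic := acyclic_of_rank (Sum.elim ![0, 1] fun _ => 2) (by revert i; decide)
  leaf_iff := by simp only [outDeg_eq_card]; revert i; decide
  leaf_indeg := by simp only [inDeg_eq_card]; revert i; decide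
  root_indeg := by simp only [inDeg_eq_card]; revert i; decide
  root_unique := by simp only [inDeg_eq_card]; revert i; decide
  root_outdeg := by simp only [outDeg_eq_card]; revert i; decide
  deg_other := by simp only [inDeg_eq_card, outDeg_eq_card]; revert i; decide

def rootedCherryTree (i : Fin 3) : PhyloNetwork (Fin 3) (Fin 3 ⊕ Fin 3) (Fin 5) where
  src := ![.inl 0, .inl 1, .inl 1, .inl 2, .inl 2]
  tgt := ![.inl 1, .inr i, .inl 2, .inr (i + 1), .inr (i + 2)]
  leafEmb := .inr
  root := .inl 0
  finV := inferInstance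
  finA := inferInstance
  leafEmb_inj := Sum.inr_injective
  acyclic := acyclic_of_rank (Sum.elim ![0, 1, 2] fun _ => 3) (by revert i; decide)
  leaf_iff := by simp only [outDeg_eq_card]; revert i; decide
  leaf_indeg := by simp only [inDeg_eq_card]; revert i; decide
  root_indeg := by simp only [inDeg_eq_card]; revert i; decide
  root_unique := by simp only [inDeg_eq_card]; revert i; decide
  root_outdeg := by simp only [outDeg_eq_card]; revert i; decide
  deg_other := by simp only [inDeg_eq_card, outDeg_eq_card]; revert i; decide

theorem cherryTree_tgt_injective (i : Fin 3) : Function.Injective (cherryTree i).tgt := by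
  revert i
  decide

theorem rootedCherryTree_tgt_injective (i : Fin 3) :
    Function.Injective (rootedCherryTree i).tgt := by
  revert i
  decide

end CherryTrees

section Classification

variable {V A : Type*} {T : PhyloNetwork (Fin 3) V A}

theorem IsPhyloTree.nonempty_iso_cherryTree (hT : IsPhyloTree T) {c : V} {i : Fin 3}
    (h : T.HasCherryBelow T.root c i) : Nonempty ((cherryTree i).Iso T) := by
  have hc : c ≠ T.root := by
    obtain ⟨a, -, rfl⟩ := h.arc_cherry
    exact T.tgt_ne_root a
  refine PhyloNetwork.nonempty_iso_of_bijective (cherryTree_tgt_injective i) hT.tgt_injective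
    (Sum.elim ![T.root, c] T.leafEmb) ⟨?_, fun v => ?_⟩ rfl (fun _ => rfl) fun e => ?_
  · refine Function.Injective.sumElim ?_ T.leafEmb_inj fun u x => ?_
    · intro u w
      fin_cases u <;> fin_cases w <;> simp [hc, hc.symm]
    · fin_cases u
      exacts [T.root_ne_leafEmb x, h.cherry_ne_leafEmb x]
  · obtain ⟨p, hp⟩ := hT.exists_arcWalk_from_root v
    have hclosed : ∀ a, (T.src a = T.root ∨ T.src a = c ∨ ∃ x, T.src a = T.leafEmb x) →
        T.tgt a = T.root ∨ T.tgt a = c ∨ ∃ x, T.tgt a = T.leafEmb x := by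
      rintro a (ha | ha | ⟨x, ha⟩)
      · exact .inr (h.tgt_of_src a (.inl ha))
      · exact .inr (h.tgt_of_src a (.inr ha))
      · exact absurd ha (T.src_ne_leafEmb a x)
    rcases hp.of_closed (P := fun v => v = T.root ∨ v = c ∨ ∃ x, v = T.leafEmb x) hclosed
        (.inl rfl) with rfl | rfl | ⟨x, rfl⟩
    exacts [⟨.inl 0, rfl⟩, ⟨.inl 1, rfl⟩, ⟨.inr x, rfl⟩]
  · fin_cases e
    exacts [h.arc_leaf, h.arc_cherry, h.cherry_arc_leaf_add_one, h.cherry_arc_leaf_add_two]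

theorem IsPhyloTree.nonempty_iso_rootedCherryTree (hT : IsPhyloTree T) {a₀ : A}
    (hout : ∀ e, T.src e = T.root ↔ e = a₀) {c : V} {i : Fin 3}
    (h : T.HasCherryBelow (T.tgt a₀) c i) : Nonempty ((rootedCherryTree i).Iso T) := by
  obtain ⟨a₁, ha₁, -⟩ := h.arc_leaf
  obtain ⟨a₂, ha₂, rfl⟩ := h.arc_cherry
  have hd : T.tgt a₀ ≠ T.root := T.tgt_ne_root a₀
  have hc : T.tgt a₂ ≠ T.root := T.tgt_ne_root a₂
  have hdc : T.tgt a₀ ≠ T.tgt a₂ := ha₂ ▸ T.src_ne_tgt a₂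
  refine PhyloNetwork.nonempty_iso_of_bijective (rootedCherryTree_tgt_injective i)
    hT.tgt_injective (Sum.elim ![T.root, T.tgt a₀, T.tgt a₂] T.leafEmb) ⟨?_, fun v => ?_⟩ rfl
    (fun _ => rfl) fun e => ?_
  · refine Function.Injective.sumElim ?_ T.leafEmb_inj fun u x => ?_
    · intro u w
      fin_cases u <;> fin_cases w <;> simp [hd, hc, hdc, hd.symm, hc.symm, hdc.symm]
    · fin_cases u
      exacts [T.root_ne_leafEmb x, ha₁ ▸ T.src_ne_leafEmb a₁ x, h.cherry_ne_leafEmb x]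
  · obtain ⟨p, hp⟩ := hT.exists_arcWalk_from_root v
    have hclosed : ∀ a, (T.src a = T.root ∨ T.src a = T.tgt a₀ ∨ T.src a = T.tgt a₂ ∨
          ∃ x, T.src a = T.leafEmb x) →
        T.tgt a = T.root ∨ T.tgt a = T.tgt a₀ ∨ T.tgt a = T.tgt a₂ ∨
          ∃ x, T.tgt a = T.leafEmb x := by
      rintro a (ha | ha | ha | ⟨x, ha⟩)
      · exact .inr (.inl ((hout a).1 ha ▸ rfl))
      · exact .inr (.inr (h.tgt_of_src a (.inl ha)))
      · exact .inr (.inr (h.tgt_of_src a (.inr ha)))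
      · exact absurd ha (T.src_ne_leafEmb a x)
    rcases hp.of_closed (P := fun v => v = T.root ∨ v = T.tgt a₀ ∨ v = T.tgt a₂ ∨
        ∃ x, v = T.leafEmb x) hclosed (.inl rfl) with rfl | rfl | rfl | ⟨x, rfl⟩
    exacts [⟨.inl 0, rfl⟩, ⟨.inl 1, rfl⟩, ⟨.inl 2, rfl⟩, ⟨.inr x, rfl⟩]
  · fin_cases e
    exacts [⟨a₀, (hout a₀).2 rfl, rfl⟩, h.arc_leaf, ⟨a₂, ha₂, rfl⟩, h.cherry_arc_leaf_add_one,
      h.cherry_arc_leaf_add_two]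

theorem fin3_singleton_ne_univ : ∀ x : Fin 3, ({x} : Finset (Fin 3)) ≠ Finset.univ := by
  decide

theorem IsPhyloTree.exists_iso_cherryTree (hT : IsPhyloTree T) :
    (∃ i, Nonempty ((cherryTree i).Iso T)) ∨ ∃ i, Nonempty ((rootedCherryTree i).Iso T) := by
  rcases T.root_outdeg with h | h
  · obtain ⟨a₀, hout⟩ := outDeg_eq_one_iff.1 h
    have hd : T.leavesBelow (T.tgt a₀) = Finset.univ := by
      rw [← T.leavesBelow_eq_of_outArcs hout, hT.leavesBelow_root]
    have hdl (x : Fin 3) : T.leafEmb x ≠ T.tgt a₀ := fun hx => by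
      rw [← hx, T.leavesBelow_leafEmb] at hd
      exact fin3_singleton_ne_univ x hd
    obtain ⟨a₁, a₂, hne, hout'⟩ := hT.exists_outArcs_eq_pair (T.tgt_ne_root a₀) hdl
    obtain ⟨c, i, hc⟩ := hT.exists_hasCherryBelow hne hout' hd
    exact .inr ⟨i, hT.nonempty_iso_rootedCherryTree hout hc⟩
  · obtain ⟨a₁, a₂, hne, hout⟩ := outDeg_eq_two_iff.1 h
    obtain ⟨c, i, hc⟩ := hT.exists_hasCherryBelow hne hout hT.leavesBelow_root
    exact .inl ⟨i, hT.nonempty_iso_cherryTree hc⟩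

end Classification

section Witnesses

variable {X V A V' A' : Type*}

def pathArcs [Fintype A'] [DecidableEq A] (φA : A' → List A) : Finset A :=
  Finset.univ.biUnion fun e => (φA e).toFinset

theorem basedOn_of_paths [Fintype A'] [DecidableEq A] [DecidableEq V]
    (N : PhyloNetwork X V A) (T : PhyloNetwork X V' A') (φV : V' → V) (φA : A' → List A)
    (h_inDeg : ∀ v, ((pathArcs φA).filter (N.tgt · = v)).card = if v = N.root then 0 else 1)
    (h_outDeg : ∀ v, ((pathArcs φA).filter (N.src · = v)).card = 0 ↔ ∃ x, N.leafEmb x = v)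
    (h_inj : φV.Injective)
    (h_range : ∀ v, (∃ y, φV y = v) ↔
      ¬ (((pathArcs φA).filter (N.tgt · = v)).card = 1 ∧
        ((pathArcs φA).filter (N.src · = v)).card = 1))
    (h_path : ∀ e, φA e ≠ [] ∧ (φA e).Nodup ∧
      ArcWalk N.src N.tgt (φV (T.src e)) (φA e) (φV (T.tgt e)) ∧
      ∀ a ∈ (φA e).dropLast, ∀ y, φV y ≠ N.tgt a)
    (h_disjoint : ∀ a e e', a ∈ φA e → a ∈ φA e' → e = e')
    (h_root : φV T.root = N.root) (h_leaf : ∀ x, φV (T.leafEmb x) = N.leafEmb x) :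
    BasedOn N T := by
  have := N.finV
  have := N.finA
  have hS (e : A') (a : A) (ha : a ∈ φA e) : a ∈ (pathArcs φA : Set A) := by
    simpa [pathArcs] using ⟨e, ha⟩
  refine ⟨pathArcs φA, φV, ⟨isRootedTree_of_inDegIn N.acyclic ?_ fun v hv => ?_, fun v => ?_⟩,
    ⟨h_inj, fun _ => trivial, fun _ _ => ⟨trivial, trivial⟩, fun v _ => ?_, φA, fun e => ?_,
      fun a ha => ?_⟩, h_root, h_leaf⟩
  · simpa [inDegIn_coe] using h_inDeg N.root
  · simpa [inDegIn_coe, hv] using h_inDeg v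
  · rw [outDegIn_coe]
    exact h_outDeg v
  · rw [inDegIn_coe, outDegIn_coe]
    exact h_range v
  · obtain ⟨hne, hnd, hwalk, hinner⟩ := h_path e
    exact ⟨hne, hnd, hS e, hwalk, fun a ha ⟨y, hy⟩ => hinner a ha y hy⟩
  · obtain ⟨e, -, he⟩ := Finset.mem_biUnion.1 ha
    exact ⟨e, List.mem_toFinset.1 he, fun e' he' => h_disjoint a e' e he' (List.mem_toFinset.1 he)⟩

end Witnesses

/-- Arcs `0 → 7, 0 → 4, 1 → 3, 1 → 6, 2 → 6, 2 → 5, 3 → 5, 3 → 9, 4 → 1, 4 → 7, 5 → 8, 6 → 10,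
7 → 2`; the reticulations are `5, 6, 7`. -/
def threeLeafNetwork : PhyloNetwork (Fin 3) (Fin 11) (Fin 13) where
  src := ![0, 0, 1, 1, 2, 2, 3, 3, 4, 4, 5, 6, 7]
  tgt := ![7, 4, 3, 6, 6, 5, 5, 9, 1, 7, 8, 10, 2]
  leafEmb := ![8, 9, 10]
  root := 0
  finV := inferInstance
  finA := inferInstance
  leafEmb_inj := by decide
  acyclic := acyclic_of_rank ![0, 2, 3, 3, 1, 4, 4, 2, 5, 4, 5] (by decide)
  leaf_iff := by simp only [outDeg_eq_card]; decide
  leaf_indeg := by simp only [inDeg_eq_card]; decide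
  root_indeg := by simp only [inDeg_eq_card]; decide
  root_unique := by simp only [inDeg_eq_card]; decide
  root_outdeg := by simp only [outDeg_eq_card]; decide
  deg_other := by simp only [inDeg_eq_card, outDeg_eq_card]; decide

theorem threeLeafNetwork_basedOn_cherryTree (i : Fin 3) :
    BasedOn threeLeafNetwork (cherryTree i) := by
  refine basedOn_of_paths _ _ (Sum.elim ![0, ![1, 2, 3] i] threeLeafNetwork.leafEmb)
    (![![[0, 12, 5, 10], [1, 8], [2, 7], [3, 11]],
      ![[1, 8, 2, 7], [0, 12], [4, 11], [5, 10]],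
      ![[0, 12, 4, 11], [1, 8, 2], [6, 10], [7]]] i) ?_ ?_ ?_ ?_ ?_ ?_ rfl fun _ => rfl
  all_goals revert i; decide

theorem threeLeafNetwork_basedOn_rootedCherryTree (i : Fin 3) :
    BasedOn threeLeafNetwork (rootedCherryTree i) := by
  refine basedOn_of_paths _ _ (Sum.elim ![0, 4, ![1, 2, 3] i] threeLeafNetwork.leafEmb)
    (![![[1], [9, 12, 5, 10], [8], [2, 7], [3, 11]],
      ![[1], [8, 2, 7], [9, 12], [4, 11], [5, 10]],
      ![[1], [9, 12, 4, 11], [8, 2], [6, 10], [7]]] i) ?_ ?_ ?_ ?_ ?_ ?_ rfl fun _ => rfl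
  all_goals revert i; decide

/-- There is a binary phylogenetic network over a 3-element leaf set
`X` that is based on every rooted binary phylogenetic `X`-tree. -/
theorem statement_17 :
    ∃ (X V A : Type) (N : PhyloNetwork X V A),
      Nat.card X = 3 ∧
      ∀ (V' : Type u4) (A' : Type u5) (T : PhyloNetwork X V' A'),
        IsPhyloTree T → BasedOn N T := by
  refine ⟨Fin 3, Fin 11, Fin 13, threeLeafNetwork, by simp, fun V' A' T hT => ?_⟩
  rcases hT.exists_iso_cherryTree with ⟨i, ⟨e⟩⟩ | ⟨i, ⟨e⟩⟩
  · exact (threeLeafNetwork_basedOn_cherryTree i).of_iso e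
  · exact (threeLeafNetwork_basedOn_rootedCherryTree i).of_iso e
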